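/- For every normalized toric Fano datum of dimension n and every i with 3 ≤ i ≤ n+1, one has 0 < (mult(μ_{1,2}) · aᵢ)/(a₁ · mult(σ₂)) ≤ 1; in particular 𝓜ᵢ ⊆ (0, 1]. -/

import Mathlib

open Finset

noncomputable section

/-- Cast an integer vector to a real vector. -/
def castVec {n : ℕ} (w : Fin n → ℤ) : Fin n → ℝ := fun j => (w j : ℝ)

/-- The coordinatewise cast `ℤⁿ →+ ℝⁿ`. -/
def castHom (n : ℕ) : (Fin n → ℤ) →+ (Fin n → ℝ) where
  toFun := castVec
  map_zero' := by funext j; simp [castVec]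
  map_add' x y := by funext j; simp [castVec]

/-- A toric Fano datum of dimension `n`: primitive vectors `v 0, …, v n ∈ ℤⁿ` whose
nonnegative real span is all of `ℝⁿ`, together with positive integers `a 0, …, a n`
with gcd one and `∑ i, a i • v i = 0`.  These data correspond to the `n`-dimensional
`ℚ`-factorial toric Fano varieties with Picard number one. -/
structure ToricFanoDatum (n : ℕ) where
  v : Fin (n + 1) → Fin n → ℤ
  a : Fin (n + 1) → ℕ
  a_pos : ∀ i, 0 < a i
  primitive : ∀ i, Finset.univ.gcd (fun j => (v i j).natAbs) = 1
  span_cone : ∀ x : Fin n → ℝ, ∃ c : Fin (n + 1) → ℝ, (∀ i, 0 ≤ c i) ∧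
      x = ∑ i, c i • castVec (v i)
  gcd_a : Finset.univ.gcd a = 1
  sum_av : ∑ i, (a i : ℤ) • v i = 0

namespace ToricFanoDatum

variable {n : ℕ}

/-- `mult(σₖ) = [ℤⁿ : ∑_{i ≠ k} ℤ vᵢ]`. -/
def multSigma (D : ToricFanoDatum n) (k : Fin (n + 1)) : ℕ :=
  (AddSubgroup.closure {w | ∃ i, i ≠ k ∧ w = D.v i}).index

/-- The lattice `ℤⁿ ∩ span_ℝ {vᵢ : i ≠ k, l}`. -/
def latticeMu (D : ToricFanoDatum n) (k l : Fin (n + 1)) : AddSubgroup (Fin n → ℤ) :=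
  AddSubgroup.comap (castHom n)
    (Submodule.span ℝ {w | ∃ i, i ≠ k ∧ i ≠ l ∧ w = castVec (D.v i)}).toAddSubgroup

/-- `mult(μ_{k,l}) = [ℤⁿ ∩ span_ℝ {vᵢ : i ≠ k, l} : ∑_{i ≠ k, l} ℤ vᵢ]`. -/
def multMu (D : ToricFanoDatum n) (k l : Fin (n + 1)) : ℕ :=
  (AddSubgroup.closure {w | ∃ i, i ≠ k ∧ i ≠ l ∧ w = D.v i}).relIndex (D.latticeMu k l)

/-- The minimal length of the extremal ray:
`l(X) = (∑ i, aᵢ) · min_{k ≠ l} mult(μ_{k,l}) / (a_l · mult(σₖ))`. -/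
def minLength (D : ToricFanoDatum n) : ℝ :=
  (∑ i, (D.a i : ℝ)) *
    sInf {x : ℝ | ∃ k l : Fin (n + 1), k ≠ l ∧
      x = (D.multMu k l : ℝ) / ((D.a l : ℝ) * (D.multSigma k : ℝ))}

/-- A datum is normalized if `mult(μ_{1,2})/(a₁ mult(σ₂)) ≤ mult(μ_{k,l})/(aₖ mult(σ_l))`
for all `k ≠ l` (here `1, 2` of the paper are the indices `0, 1`). -/
def Normalized (D : ToricFanoDatum n) : Prop :=
  ∀ k l : Fin (n + 1), k ≠ l →
    (D.multMu 0 1 : ℝ) / ((D.a 0 : ℝ) * (D.multSigma 1 : ℝ)) ≤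
      (D.multMu k l : ℝ) / ((D.a k : ℝ) * (D.multSigma l : ℝ))

end ToricFanoDatum

/-- `𝓛ₙ^toric`, the set of minimal lengths of extremal rays of `n`-dimensional
`ℚ`-factorial toric Fano varieties with Picard number one. -/
def LtoricSet (n : ℕ) : Set ℝ := {x | ∃ D : ToricFanoDatum n, x = D.minLength}

/-- `𝓜ᵢ`: the set of values `mult(μ_{1,2}) · aᵢ / (a₁ · mult(σ₂))` over all normalized
toric Fano data of dimension `n`. -/
def Mset (n : ℕ) (i : Fin (n + 1)) : Set ℝ :=
  {x | ∃ D : ToricFanoDatum n, D.Normalized ∧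
    x = ((D.multMu 0 1 : ℝ) * (D.a i : ℝ)) / ((D.a 0 : ℝ) * (D.multSigma 1 : ℝ))}

/-- A set of reals satisfies the ascending chain condition if every nondecreasing
sequence of its elements is eventually constant. -/
def SatisfiesACC (A : Set ℝ) : Prop :=
  ∀ f : ℕ → ℝ, (∀ k, f k ∈ A) → Monotone f → ∃ N, ∀ m, N ≤ m → f m = f N

/-- A set of reals satisfies the descending chain condition if every nonincreasing
sequence of its elements is eventually constant. -/
def SatisfiesDCC (A : Set ℝ) : Prop :=
  ∀ f : ℕ → ℝ, (∀ k, f k ∈ A) → Antitone f → ∃ N, ∀ m, N ≤ m → f m = f N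


section Aux

open Matrix in
lemma matCastMap_det {m : ℕ} (M : Matrix (Fin m) (Fin m) ℤ) :
    ((M.map (Int.cast : ℤ → ℝ)).det) = ((M.det : ℤ) : ℝ) :=
  ((Int.castRingHom ℝ).map_det M).symm

namespace ToricFanoDatum

open Matrix

variable {n : ℕ} (D : ToricFanoDatum n)

lemma castVec_sum {m : ℕ} (c : Fin m → ℤ) (w : Fin m → (Fin n → ℤ)) :
    castVec (∑ i, c i • w i) = ∑ i, ((c i : ℝ)) • castVec (w i) := by
  funext j
  simp only [castVec, Finset.sum_apply, Pi.smul_apply, smul_eq_mul]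
  push_cast
  rfl

lemma span_top (l : Fin (n + 1)) :
    Submodule.span ℝ (Set.range fun j => castVec (D.v (l.succAbove j))) = ⊤ := by
  rw [eq_top_iff]
  rintro x -
  obtain ⟨c, -, rfl⟩ := D.span_cone x
  refine Submodule.sum_mem _ fun i _ => Submodule.smul_mem _ _ ?_
  rcases eq_or_ne i l with rfl | hi
  · have h0 : (0 : Fin n → ℝ) = ∑ i0, (((D.a i0 : ℤ) : ℝ)) • castVec (D.v i0) := by
      rw [← castVec_sum, D.sum_av]
      funext j; simp [castVec]
    rw [Fin.sum_univ_succAbove (fun i0 => (((D.a i0 : ℤ) : ℝ)) • castVec (D.v i0)) i] at h0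
    have ha : (((D.a i : ℤ) : ℝ)) ≠ 0 := by
      exact_mod_cast Nat.cast_ne_zero.mpr (D.a_pos i).ne'
    have hmem : ∑ j, (((D.a (i.succAbove j) : ℤ) : ℝ)) • castVec (D.v (i.succAbove j)) ∈
        Submodule.span ℝ (Set.range fun j => castVec (D.v (i.succAbove j))) :=
      Submodule.sum_mem _ fun j _ =>
        Submodule.smul_mem _ _ (Submodule.subset_span (Set.mem_range_self j))
    have hA : (((D.a i : ℤ) : ℝ)) • castVec (D.v i) ∈
        Submodule.span ℝ (Set.range fun j => castVec (D.v (i.succAbove j))) := by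
      have heq := eq_neg_of_add_eq_zero_left h0.symm
      rw [heq]
      exact neg_mem hmem
    have := Submodule.smul_mem
      (Submodule.span ℝ (Set.range fun j => castVec (D.v (i.succAbove j))))
      (((D.a i : ℤ) : ℝ))⁻¹ hA
    rwa [smul_smul, inv_mul_cancel₀ ha, one_smul] at this
  · obtain ⟨j, hj⟩ := Fin.exists_succAbove_eq hi
    rw [← hj]
    exact Submodule.subset_span (Set.mem_range_self j)

lemma indep (l : Fin (n + 1)) :
    LinearIndependent ℝ (fun j => castVec (D.v (l.succAbove j))) :=
  linearIndependent_of_top_le_span_of_card_eq_finrank (D.span_top l).ge (by simp)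

/-- Basis of `ℝⁿ` from the vectors `vᵢ`, `i ≠ l`. -/
def bas (l : Fin (n + 1)) : Module.Basis (Fin n) ℝ (Fin n → ℝ) :=
  Module.Basis.mk (D.indep l) (D.span_top l).ge

lemma bas_apply (l : Fin (n + 1)) (j : Fin n) :
    D.bas l j = castVec (D.v (l.succAbove j)) := Module.Basis.mk_apply _ _ j

/-- The integer matrix whose columns are the `vᵢ`, `i ≠ l`. -/
def matOf (l : Fin (n + 1)) : Matrix (Fin n) (Fin n) ℤ :=
  Matrix.of fun r c => D.v (l.succAbove c) r

lemma det_ne_zero (l : Fin (n + 1)) : (D.matOf l).det ≠ 0 := by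
  have h1 : LinearIndependent ℝ (fun c => ((D.matOf l).map (Int.cast : ℤ → ℝ))ᵀ c) := by
    have : (fun c => ((D.matOf l).map (Int.cast : ℤ → ℝ))ᵀ c)
        = fun j => castVec (D.v (l.succAbove j)) := by
      funext c r; rfl
    rw [this]
    exact D.indep l
  have h2 : IsUnit ((D.matOf l).map (Int.cast : ℤ → ℝ)) :=
    Matrix.linearIndependent_cols_iff_isUnit.mp h1
  have h3 : IsUnit (((D.matOf l).map (Int.cast : ℤ → ℝ)).det) :=
    (Matrix.isUnit_iff_isUnit_det _).mp h2
  rw [matCastMap_det] at h3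
  exact_mod_cast h3.ne_zero

lemma smul_mem_span (l : Fin (n + 1)) (x : Fin n → ℤ) :
    (D.matOf l).det • x ∈ Submodule.span ℤ (Set.range fun j => D.v (l.succAbove j)) := by
  rw [← Matrix.mulVec_cramer (D.matOf l) x]
  have : (D.matOf l) *ᵥ (Matrix.cramer (D.matOf l) x)
      = ∑ c, (Matrix.cramer (D.matOf l) x c) • (D.v (l.succAbove c)) := by
    funext r
    simp [Matrix.mulVec, dotProduct, matOf, Finset.sum_apply, mul_comm]
  rw [this]
  exact Submodule.sum_mem _ fun c _ =>
    Submodule.smul_mem _ _ (Submodule.subset_span (Set.mem_range_self c))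

lemma setSigma_eq (l : Fin (n + 1)) :
    {w : Fin n → ℤ | ∃ i, i ≠ l ∧ w = D.v i}
      = Set.range fun j => D.v (l.succAbove j) := by
  ext w
  constructor
  · rintro ⟨i, hil, rfl⟩
    obtain ⟨j, rfl⟩ := Fin.exists_succAbove_eq hil
    exact ⟨j, rfl⟩
  · rintro ⟨j, rfl⟩
    exact ⟨l.succAbove j, Fin.succAbove_ne l j, rfl⟩

lemma multSigma_ne_zero (l : Fin (n + 1)) : D.multSigma l ≠ 0 := by
  unfold multSigma
  rw [D.setSigma_eq l]
  set K : AddSubgroup (Fin n → ℤ) :=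
    AddSubgroup.closure (Set.range fun j => D.v (l.succAbove j)) with hK
  set d : ℤ := (D.matOf l).det with hd'
  have hd : d ≠ 0 := D.det_ne_zero l
  have hKd : ∀ x : Fin n → ℤ, d.natAbs • x ∈ K := by
    intro x
    have h1 : d • x ∈ K := by
      rw [hK, ← Submodule.span_int_eq_addSubgroupClosure, Submodule.mem_toAddSubgroup]
      exact D.smul_mem_span l x
    have hd2 : ((d.natAbs : ℤ)) = d ∨ ((d.natAbs : ℤ)) = -d := by omega
    have h2 : (d.natAbs) • x = d • x ∨ (d.natAbs) • x = -(d • x) := by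
      rcases hd2 with h | h
      · left; funext j
        simp only [Pi.smul_apply, smul_eq_mul, nsmul_eq_mul]
        rw [h]
      · right; funext j
        simp only [Pi.smul_apply, Pi.neg_apply, smul_eq_mul, nsmul_eq_mul]
        rw [h]; ring
    rcases h2 with h | h
    · rw [h]; exact h1
    · rw [h]; exact neg_mem h1
  have tors : AddMonoid.IsTorsion ((Fin n → ℤ) ⧸ K) := by
    intro q
    induction q using QuotientAddGroup.induction_on with
    | _ x =>
      rw [isOfFinAddOrder_iff_nsmul_eq_zero]
      refine ⟨d.natAbs, Int.natAbs_pos.mpr hd, ?_⟩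
      rw [← QuotientAddGroup.mk_nsmul]
      exact (QuotientAddGroup.eq_zero_iff _).mpr (hKd x)
  haveI : AddGroup.FG (Fin n → ℤ) := Module.Finite.iff_addGroup_fg.mp inferInstance
  haveI : Finite ((Fin n → ℤ) ⧸ K) := AddCommGroup.finite_of_fg_torsion _ tors
  exact AddSubgroup.index_ne_zero_of_finite

lemma closure_inf {k l : Fin (n + 1)} (hkl : k ≠ l) :
    AddSubgroup.closure {w : Fin n → ℤ | ∃ i, i ≠ k ∧ i ≠ l ∧ w = D.v i}
      = AddSubgroup.closure {w : Fin n → ℤ | ∃ i, i ≠ l ∧ w = D.v i} ⊓ D.latticeMu k l := by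
  apply le_antisymm
  · rw [AddSubgroup.closure_le]
    rintro w ⟨i, hik, hil, rfl⟩
    refine ⟨AddSubgroup.subset_closure ⟨i, hil, rfl⟩, ?_⟩
    show castVec (D.v i) ∈ Submodule.span ℝ {w | ∃ i, i ≠ k ∧ i ≠ l ∧ w = castVec (D.v i)}
    exact Submodule.subset_span ⟨i, hik, hil, rfl⟩
  · intro x hx
    obtain ⟨hxK, hxL⟩ := AddSubgroup.mem_inf.mp hx
    rw [← Submodule.span_int_eq_addSubgroupClosure, Submodule.mem_toAddSubgroup,
      D.setSigma_eq l, Submodule.mem_span_range_iff_exists_fun] at hxK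
    obtain ⟨c, hc⟩ := hxK
    obtain ⟨j0, hj0⟩ := Fin.exists_succAbove_eq hkl
    rw [latticeMu, AddSubgroup.mem_comap, Submodule.mem_toAddSubgroup] at hxL
    have hxL' : (castHom n) x ∈
        Submodule.span ℝ ((D.bas l) '' {j | l.succAbove j ≠ k}) := by
      refine Submodule.span_le.mpr ?_ hxL
      rintro w ⟨i, hik, hil, rfl⟩
      obtain ⟨j, rfl⟩ := Fin.exists_succAbove_eq hil
      exact Submodule.subset_span ⟨j, hik, D.bas_apply l j⟩
    rw [Module.Basis.mem_span_image] at hxL'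
    have hcx : (castHom n) x = ∑ j, ((c j : ℝ)) • (D.bas l) j := by
      show castVec x = _
      rw [← hc, castVec_sum]
      exact Finset.sum_congr rfl fun j _ => by rw [D.bas_apply l j]
    have hval : ((D.bas l).repr ((castHom n) x)) j0 = ((c j0 : ℝ)) := by
      rw [hcx]
      simp [Finsupp.single_apply]
    have hc0 : c j0 = 0 := by
      have h : ((D.bas l).repr ((castHom n) x)) j0 = 0 := by
        by_contra h
        exact (hxL' (Finsupp.mem_support_iff.mpr h)) hj0
      rw [hval] at h
      exact_mod_cast h
    rw [← Submodule.span_int_eq_addSubgroupClosure, Submodule.mem_toAddSubgroup, ← hc]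
    refine Submodule.sum_mem _ fun j _ => ?_
    rcases eq_or_ne j j0 with rfl | hj
    · rw [hc0, zero_smul]; exact Submodule.zero_mem _
    · refine Submodule.smul_mem _ _ (Submodule.subset_span ⟨l.succAbove j, ?_,
        Fin.succAbove_ne l j, rfl⟩)
      rw [← hj0]
      exact fun h => hj (Fin.succAbove_right_injective h)

lemma multMu_dvd {k l : Fin (n + 1)} (hkl : k ≠ l) : D.multMu k l ∣ D.multSigma l := by
  unfold multMu multSigma
  rw [D.closure_inf hkl, AddSubgroup.inf_relIndex_right]
  exact AddSubgroup.relIndex_dvd_index_of_normal _ _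

end ToricFanoDatum

end Aux

/-- For every normalized toric Fano datum of dimension `n` and every `i` with
`3 ≤ i ≤ n + 1` in the paper's 1-based indexing (i.e. `2 ≤ i` for `i : Fin (n+1)`),
one has `0 < mult(μ_{1,2}) · aᵢ / (a₁ · mult(σ₂)) ≤ 1`; in particular `𝓜ᵢ ⊆ (0, 1]`. -/
theorem Mset_subset_Ioc (n : ℕ) (hn : 1 ≤ n) (i : Fin (n + 1)) (hi : 2 ≤ (i : ℕ)) :
    (∀ D : ToricFanoDatum n, D.Normalized →
      0 < ((D.multMu 0 1 : ℝ) * (D.a i : ℝ)) / ((D.a 0 : ℝ) * (D.multSigma 1 : ℝ)) ∧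
      ((D.multMu 0 1 : ℝ) * (D.a i : ℝ)) / ((D.a 0 : ℝ) * (D.multSigma 1 : ℝ)) ≤ 1) ∧
    Mset n i ⊆ Set.Ioc 0 1 := by
  have h1mod : 1 % (n + 1) = 1 := Nat.mod_eq_of_lt (by omega)
  have hi0 : i ≠ 0 := by
    intro h
    rw [h] at hi
    simp at hi
  have h01 : (0 : Fin (n + 1)) ≠ 1 := by
    intro h
    have := congrArg Fin.val h
    rw [Fin.val_zero, Fin.val_one'] at this
    omega
  have main : ∀ D : ToricFanoDatum n, D.Normalized →
      0 < ((D.multMu 0 1 : ℝ) * (D.a i : ℝ)) / ((D.a 0 : ℝ) * (D.multSigma 1 : ℝ)) ∧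
      ((D.multMu 0 1 : ℝ) * (D.a i : ℝ)) / ((D.a 0 : ℝ) * (D.multSigma 1 : ℝ)) ≤ 1 := by
    intro D hD
    have hS1 : D.multSigma 1 ≠ 0 := D.multSigma_ne_zero 1
    have hS0 : D.multSigma 0 ≠ 0 := D.multSigma_ne_zero 0
    have hM01 : D.multMu 0 1 ≠ 0 := by
      intro h
      have hd := D.multMu_dvd h01
      rw [h] at hd
      exact hS1 (zero_dvd_iff.mp hd)
    have hMi0 : D.multMu i 0 ≤ D.multSigma 0 :=
      Nat.le_of_dvd (Nat.pos_of_ne_zero hS0) (D.multMu_dvd hi0)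
    have ha0 : (0 : ℝ) < D.a 0 := by exact_mod_cast D.a_pos 0
    have hai : (0 : ℝ) < D.a i := by exact_mod_cast D.a_pos i
    have hS1' : (0 : ℝ) < D.multSigma 1 := by
      exact_mod_cast Nat.pos_of_ne_zero hS1
    have hS0' : (0 : ℝ) < D.multSigma 0 := by
      exact_mod_cast Nat.pos_of_ne_zero hS0
    have hM01' : (0 : ℝ) < D.multMu 0 1 := by
      exact_mod_cast Nat.pos_of_ne_zero hM01
    have hMi0' : (D.multMu i 0 : ℝ) ≤ D.multSigma 0 := by exact_mod_cast hMi0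
    constructor
    · exact div_pos (mul_pos hM01' hai) (mul_pos ha0 hS1')
    · rw [div_le_one (mul_pos ha0 hS1')]
      have hnorm := hD i 0 hi0
      rw [div_le_div_iff₀ (mul_pos ha0 hS1') (mul_pos hai hS0')] at hnorm
      have h3 : (D.multMu 0 1 : ℝ) * (D.a i) * (D.multSigma 0)
          ≤ ((D.a 0 : ℝ) * (D.multSigma 1)) * (D.multSigma 0) := by
        nlinarith [mul_le_mul_of_nonneg_right hMi0'
          (le_of_lt (mul_pos ha0 hS1'))]
      exact le_of_mul_le_mul_right h3 hS0'
  refine ⟨main, ?_⟩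
  rintro x ⟨D, hD, rfl⟩
  exact ⟨(main D hD).1, (main D hD).2⟩

end
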